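/- The gates U^{(τᵢⱼ)} = P·R(τᵢ−τⱼ) satisfy the braided Yang-Baxter equation: (I⊗U^{(τ₁₃)})(U^{(τ₂₃)}⊗I)(I⊗U^{(τ₂₁)}) = (U^{(τ₂₁)}⊗I)(I⊗U^{(τ₂₃)})(U^{(τ₁₃)}⊗I) on (ℂ²)^⊗3. -/
import Mathlib


open Matrix Complex

/-- The swap operator on ℂ² ⊗ ℂ². -/
noncomputable def Pswap : Matrix (Fin 2 × Fin 2) (Fin 2 × Fin 2) ℂ :=
  fun a b => if a.1 = b.2 ∧ a.2 = b.1 then 1 else 0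

/-- The Heisenberg R-matrix R(λ) = (P − iλ·I)/(1 − iλ). -/
noncomputable def Rmat (lam : ℂ) : Matrix (Fin 2 × Fin 2) (Fin 2 × Fin 2) ℂ :=
  (1 - Complex.I * lam)⁻¹ • (Pswap - (Complex.I * lam) • 1)

abbrev Q3 := Fin 2 × Fin 2 × Fin 2

/-- A two-site operator acting on tensor factors 1 and 2 of (ℂ²)^⊗3. -/
noncomputable def op12 (M : Matrix (Fin 2 × Fin 2) (Fin 2 × Fin 2) ℂ) : Matrix Q3 Q3 ℂ :=
  fun a b => M (a.1, a.2.1) (b.1, b.2.1) * (if a.2.2 = b.2.2 then 1 else 0)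

/-- A two-site operator acting on tensor factors 1 and 3 of (ℂ²)^⊗3. -/
noncomputable def op13 (M : Matrix (Fin 2 × Fin 2) (Fin 2 × Fin 2) ℂ) : Matrix Q3 Q3 ℂ :=
  fun a b => M (a.1, a.2.2) (b.1, b.2.2) * (if a.2.1 = b.2.1 then 1 else 0)

/-- A two-site operator acting on tensor factors 2 and 3 of (ℂ²)^⊗3. -/
noncomputable def op23 (M : Matrix (Fin 2 × Fin 2) (Fin 2 × Fin 2) ℂ) : Matrix Q3 Q3 ℂ :=
  fun a b => M (a.2.1, a.2.2) (b.2.1, b.2.2) * (if a.1 = b.1 then 1 else 0)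

/-- The two-qubit gate U^{(τᵢⱼ)} = P·R(τᵢ−τⱼ), written as a function of τᵢ−τⱼ. -/
noncomputable def Ugate (mu : ℂ) : Matrix (Fin 2 × Fin 2) (Fin 2 × Fin 2) ℂ :=
  Pswap * Rmat mu

/-! ### Auxiliary lemmas -/

lemma Pswap_sq : Pswap * Pswap = 1 := by
  ext ⟨a, b⟩ ⟨c, d⟩
  simp only [Pswap, Matrix.mul_apply, Fintype.sum_prod_type, Fin.sum_univ_two, Matrix.one_apply]
  fin_cases a <;> fin_cases b <;> fin_cases c <;> fin_cases d <;> simp [Prod.ext_iff]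

lemma Ugate_eq (mu : ℂ) :
    Ugate mu = (1 - Complex.I * mu)⁻¹ • ((1 : Matrix (Fin 2 × Fin 2) (Fin 2 × Fin 2) ℂ)
      - (Complex.I * mu) • Pswap) := by
  rw [Ugate, Rmat, Matrix.mul_smul, mul_sub, Pswap_sq, Matrix.mul_smul, mul_one]

noncomputable def E12 : Matrix Q3 Q3 ℂ := op12 Pswap
noncomputable def E23 : Matrix Q3 Q3 ℂ := op23 Pswap

lemma E23_mul_apply (M : Matrix Q3 Q3 ℂ) (a : Q3) (b : Q3) :
    (E23 * M) a b = M (a.1, a.2.2, a.2.1) b := by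
  rw [Matrix.mul_apply, Finset.sum_eq_single (a.1, a.2.2, a.2.1)]
  · simp [E23, op23, Pswap]
  · rintro ⟨j1, j2, j3⟩ _ hj
    simp only [E23, op23, Pswap, Prod.mk.injEq, ne_eq, Prod.ext_iff] at hj ⊢
    split_ifs with h1 h2 <;> simp_all
  · simp

lemma E12_mul_apply (M : Matrix Q3 Q3 ℂ) (a : Q3) (b : Q3) :
    (E12 * M) a b = M (a.2.1, a.1, a.2.2) b := by
  rw [Matrix.mul_apply, Finset.sum_eq_single (a.2.1, a.1, a.2.2)]
  · simp [E12, op12, Pswap]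
  · rintro ⟨j1, j2, j3⟩ _ hj
    simp only [E12, op12, Pswap, Prod.mk.injEq, ne_eq, Prod.ext_iff] at hj ⊢
    split_ifs with h1 h2 <;> simp_all
  · simp

lemma E12_sq : E12 * E12 = 1 := by
  ext a b
  rw [E12_mul_apply]
  simp [E12, op12, Pswap, Matrix.one_apply, Prod.ext_iff]
  split_ifs <;> tauto

lemma E23_sq : E23 * E23 = 1 := by
  ext a b
  rw [E23_mul_apply]
  simp [E23, op23, Pswap, Matrix.one_apply, Prod.ext_iff]
  split_ifs <;> tauto

lemma braid : E23 * E12 * E23 = E12 * E23 * E12 := by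
  ext a b
  rw [mul_assoc, mul_assoc, E23_mul_apply, E12_mul_apply, E12_mul_apply, E23_mul_apply]
  simp [E12, E23, op12, op23, Pswap, Prod.ext_iff]
  split_ifs <;> tauto

lemma op12_one : op12 1 = 1 := by
  ext a b
  simp only [op12, Matrix.one_apply, Prod.ext_iff]
  split_ifs <;> simp_all

lemma op23_one : op23 1 = 1 := by
  ext a b
  simp only [op23, Matrix.one_apply, Prod.ext_iff]
  split_ifs <;> simp_all

lemma op12_smul (c : ℂ) (M : Matrix (Fin 2 × Fin 2) (Fin 2 × Fin 2) ℂ) :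
    op12 (c • M) = c • op12 M := by
  ext a b; simp [op12, mul_assoc]

lemma op23_smul (c : ℂ) (M : Matrix (Fin 2 × Fin 2) (Fin 2 × Fin 2) ℂ) :
    op23 (c • M) = c • op23 M := by
  ext a b; simp [op23, mul_assoc]

lemma op12_sub (M N : Matrix (Fin 2 × Fin 2) (Fin 2 × Fin 2) ℂ) :
    op12 (M - N) = op12 M - op12 N := by
  ext a b
  simp only [op12, Matrix.sub_apply]
  split_ifs <;> ring

lemma op23_sub (M N : Matrix (Fin 2 × Fin 2) (Fin 2 × Fin 2) ℂ) :
    op23 (M - N) = op23 M - op23 N := by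
  ext a b
  simp only [op23, Matrix.sub_apply]
  split_ifs <;> ring

lemma op12_Ugate (mu : ℂ) :
    op12 (Ugate mu) = (1 - Complex.I * mu)⁻¹ •
      ((1 : Matrix Q3 Q3 ℂ) - (Complex.I * mu) • E12) := by
  rw [Ugate_eq, op12_smul, op12_sub, op12_smul, op12_one, E12]

lemma op23_Ugate (mu : ℂ) :
    op23 (Ugate mu) = (1 - Complex.I * mu)⁻¹ •
      ((1 : Matrix Q3 Q3 ℂ) - (Complex.I * mu) • E23) := by
  rw [Ugate_eq, op23_smul, op23_sub, op23_smul, op23_one, E23]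

lemma key (x z : ℂ) {E F : Matrix Q3 Q3 ℂ}
    (hE : E * E = 1) (hF : F * F = 1) (hbr : E * F * E = F * E * F) :
    (1 - x • E) * (1 - (x + z) • F) * (1 - z • E) =
      (1 - z • F) * (1 - (x + z) • E) * (1 - x • F) := by
  simp only [sub_mul, mul_sub, add_mul, mul_add, one_mul, mul_one, smul_mul_assoc,
    mul_smul_comm, smul_smul, smul_sub, smul_add, mul_assoc]
  rw [show E * (F * E) = F * (E * F) by rw [← mul_assoc, ← mul_assoc, hbr], hE, hF]
  module

theorem braided_yang_baxter (tau1 tau2 tau3 : ℂ)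
    (h13 : tau1 - tau3 ≠ -Complex.I) (h23 : tau2 - tau3 ≠ -Complex.I)
    (h21 : tau2 - tau1 ≠ -Complex.I) :
    op23 (Ugate (tau1 - tau3)) * op12 (Ugate (tau2 - tau3)) * op23 (Ugate (tau2 - tau1)) =
      op12 (Ugate (tau2 - tau1)) * op23 (Ugate (tau2 - tau3)) *
        op12 (Ugate (tau1 - tau3)) := by
  simp only [op12_Ugate, op23_Ugate]
  rw [show Complex.I * (tau2 - tau3)
      = Complex.I * (tau1 - tau3) + Complex.I * (tau2 - tau1) by ring]
  simp only [Matrix.smul_mul, Matrix.mul_smul, smul_smul]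
  rw [key (Complex.I * (tau1 - tau3)) (Complex.I * (tau2 - tau1)) E23_sq E12_sq braid]
  congr 1
  ring
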